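/- arXiv:2412.13819 — 2 statements merged into one kernel-verified Lean document; each statement's English description precedes it below -/
import Mathlib

section
/- Let M be a nonzero real k×l matrix and let α ∈ ℝ^k, β ∈ ℝ^l be vectors with αᵀMβ = 0. Then there exist vectors e_α ∈ ℝ^k and e_β ∈ ℝ^l such that for every y > 0, (α + y e_α)ᵀ M (β + y e_β) < 0. -/
/-!
Since `B a b = 0`, the perturbed value `B (a + y • ea) (b + y • eb)` equals
`y * (B a eb + B ea b) + y ^ 2 * B ea eb`. If `B a ≠ 0` or `B (·) b ≠ 0`, one perturbation suffices
to make the linear coefficient `-1`; otherwise `B ≠ 0` makes the quadratic coefficient `-1`.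
-/

open Matrix

namespace LinearMap

variable {𝕜 E F : Type*} [Field 𝕜] [AddCommGroup E] [Module 𝕜 E] [AddCommGroup F] [Module 𝕜 F]

theorem apply_add_smul_add_smul (B : E →ₗ[𝕜] F →ₗ[𝕜] 𝕜) (a ea : E) (b eb : F) (y : 𝕜) :
    B (a + y • ea) (b + y • eb) = B a b + y * (B a eb + B ea b) + y ^ 2 * B ea eb := by
  simp only [map_add, map_smul, add_apply, smul_apply, smul_eq_mul]
  ring

theorem exists_perturbation_neg [LinearOrder 𝕜] [IsStrictOrderedRing 𝕜]
    {B : E →ₗ[𝕜] F →ₗ[𝕜] 𝕜} (hB : B ≠ 0) {a : E} {b : F} (hab : B a b = 0) :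
    ∃ ea eb, ∀ y : 𝕜, 0 < y → B (a + y • ea) (b + y • eb) < 0 := by
  simp_rw [apply_add_smul_add_smul, hab, zero_add]
  by_cases ha : B a = 0
  · by_cases hb : B.flip b = 0
    · obtain ⟨u, hu⟩ : ∃ u, B u ≠ 0 := not_forall.mp fun h ↦ hB (ext h)
      obtain ⟨v, huv⟩ := surjective_of_ne_zero hu (-1)
      refine ⟨u, v, fun y hy ↦ ?_⟩
      rw [ha, huv, ← flip_apply B, hb]
      simp only [zero_apply, add_zero, mul_zero, zero_add, mul_neg_one, neg_neg_iff_pos]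
      positivity
    · obtain ⟨u, hu⟩ := surjective_of_ne_zero hb (-1)
      refine ⟨u, 0, fun y hy ↦ ?_⟩
      rw [← flip_apply B u, hu]
      simp [hy]
  · obtain ⟨v, hv⟩ := surjective_of_ne_zero ha (-1)
    refine ⟨0, v, fun y hy ↦ ?_⟩
    simp [hv, hy]

end LinearMap

/-- Perturbation lemma: for a nonzero real matrix `M` and vectors `α`, `β` with `αᵀMβ = 0`,
there are perturbation directions making the bilinear form strictly negative for all `y > 0`. -/
theorem bilinear_perturbation_neg
    (k l : ℕ) (M : Matrix (Fin k) (Fin l) ℝ) (hM : M ≠ 0)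
    (α : Fin k → ℝ) (β : Fin l → ℝ) (h : α ⬝ᵥ M.mulVec β = 0) :
    ∃ eα : Fin k → ℝ, ∃ eβ : Fin l → ℝ,
      ∀ y : ℝ, 0 < y → (α + y • eα) ⬝ᵥ M.mulVec (β + y • eβ) < 0 := by
  simp_rw [← toLinearMap₂'_apply'] at h ⊢
  exact LinearMap.exists_perturbation_neg
    ((LinearEquiv.map_ne_zero_iff (toLinearMap₂' ℝ)).mpr hM) h
end

section
/- Let β be a real m×n matrix with all entries nonzero, and let ã ∈ ℝ^m, b̃ ∈ ℝ^n be vectors with ãᵀ β b̃ = 0 and with some coordinate product ã_i b̃_j ≠ 0. Then β ã b̃-bilinearly admits a strictly negative perturbation: there exist e_a ∈ ℝ^m, e_b ∈ ℝ^n such that for all y > 0, (ã + y e_a)ᵀ β (b̃ + y e_b) < 0. -/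
/-!
Once `B a₀ b₀ = 0`, the form along the perturbation is `y * L + y ^ 2 * B eₐ e_b` with `L` linear in
`(eₐ, e_b)`. For a pair with `c := B u v ≠ 0`, taking `e_b = s • v` and `eₐ = -(s * c) • u` makes
the quadratic coefficient `-(s * c) ^ 2 < 0` and `L = s * (B a₀ v - c * B u b₀)`; choosing the sign
of `s ≠ 0` against that constant makes `L ≤ 0`, so the form is negative for every `y > 0`.
-/

open Matrix

theorem exists_ne_zero_mul_nonpos {R : Type*} [CommRing R] [LinearOrder R] [IsStrictOrderedRing R]
    (d : R) : ∃ s : R, s ≠ 0 ∧ s * d ≤ 0 := by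
  by_cases hd : d = 0
  · exact ⟨1, one_ne_zero, by simp [hd]⟩
  · exact ⟨-d, neg_ne_zero.mpr hd, by nlinarith [sq_nonneg d]⟩

namespace LinearMap

variable {R M N : Type*} [CommRing R] [AddCommGroup M] [Module R M] [AddCommGroup N] [Module R N]

theorem apply_add_smul_apply_add_smul (B : M →ₗ[R] N →ₗ[R] R) (a u : M) (b v : N) (y : R) :
    B (a + y • u) (b + y • v) = B a b + y * (B u b + B a v) + y ^ 2 * B u v := by
  simp only [map_add, map_smul, add_apply, smul_apply, smul_eq_mul]
  ring

theorem exists_perturbation_apply_neg [LinearOrder R] [IsStrictOrderedRing R]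
    (B : M →ₗ[R] N →ₗ[R] R) {a₀ : M} {b₀ : N}
    (h₀ : B a₀ b₀ = 0) {u : M} {v : N} (huv : B u v ≠ 0) :
    ∃ ea : M, ∃ eb : N, ∀ y : R, 0 < y → B (a₀ + y • ea) (b₀ + y • eb) < 0 := by
  obtain ⟨s, hs, hlin⟩ := exists_ne_zero_mul_nonpos (B a₀ v - B u v * B u b₀)
  refine ⟨(-(s * B u v)) • u, s • v, fun y hy => ?_⟩
  have hquad : 0 < (s * B u v) ^ 2 := by positivity
  have hlin' : y * (s * (B a₀ v - B u v * B u b₀)) ≤ 0 := mul_nonpos_of_nonneg_of_nonpos hy.le hlin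
  rw [apply_add_smul_apply_add_smul, h₀]
  simp only [map_smul, smul_apply, smul_eq_mul]
  nlinarith [mul_pos (pow_pos hy 2) hquad]

end LinearMap

theorem Matrix.exists_perturbation_dotProduct_mulVec_neg {R m n : Type*} [CommRing R]
    [LinearOrder R] [IsStrictOrderedRing R] [Fintype m] [Fintype n] [DecidableEq m] [DecidableEq n]
    (β : Matrix m n R) {a₀ : m → R} {b₀ : n → R} (h₀ : a₀ ⬝ᵥ β *ᵥ b₀ = 0) {i : m} {j : n}
    (hij : β i j ≠ 0) :
    ∃ ea : m → R, ∃ eb : n → R, ∀ y : R, 0 < y → (a₀ + y • ea) ⬝ᵥ β *ᵥ (b₀ + y • eb) < 0 := by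
  let B : (m → R) →ₗ[R] (n → R) →ₗ[R] R := toLinearMap₂' R β
  have hB (a : m → R) (b : n → R) : B a b = a ⬝ᵥ β *ᵥ b := toLinearMap₂'_apply' β a b
  have hsingle : B (Pi.single i 1) (Pi.single j 1) = β i j := by
    rw [hB, mulVec_single_one, single_one_dotProduct, col_apply]
  obtain ⟨ea, eb, hneg⟩ := B.exists_perturbation_apply_neg ((hB a₀ b₀).trans h₀)
    (hsingle.trans_ne hij)
  exact ⟨ea, eb, fun y hy => (hB _ _).symm.trans_lt (hneg y hy)⟩

theorem bilinear_perturbation_neg_of_nonzero_entries_general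
    (m n : ℕ) (β : Matrix (Fin m) (Fin n) ℝ) (hβ : ∀ x y, β x y ≠ 0)
    (a0 : Fin m → ℝ) (b0 : Fin n → ℝ)
    (h0 : a0 ⬝ᵥ β.mulVec b0 = 0)
    (i : Fin m) (j : Fin n) :
    ∃ ea : Fin m → ℝ, ∃ eb : Fin n → ℝ,
      ∀ y : ℝ, 0 < y → (a0 + y • ea) ⬝ᵥ β.mulVec (b0 + y • eb) < 0 :=
  β.exists_perturbation_dotProduct_mulVec_neg h0 (hβ i j)

/-- Core of Corollary 4: if all entries of `β` are nonzero, `a0ᵀβb0 = 0`, and some product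
`a0 i * b0 j ≠ 0`, then the bilinear form admits a strictly negative perturbation. -/
theorem bilinear_perturbation_neg_of_nonzero_entries
    (m n : ℕ) (β : Matrix (Fin m) (Fin n) ℝ) (hβ : ∀ x y, β x y ≠ 0)
    (a0 : Fin m → ℝ) (b0 : Fin n → ℝ)
    (h0 : a0 ⬝ᵥ β.mulVec b0 = 0)
    (i : Fin m) (j : Fin n) (hij : a0 i * b0 j ≠ 0) :
    ∃ ea : Fin m → ℝ, ∃ eb : Fin n → ℝ,
      ∀ y : ℝ, 0 < y → (a0 + y • ea) ⬝ᵥ β.mulVec (b0 + y • eb) < 0 :=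
  bilinear_perturbation_neg_of_nonzero_entries_general m n β hβ a0 b0 h0 i j
end
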